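/- arXiv:math/0406424 — 2 statements merged into one kernel-verified Lean document; each statement's English description precedes it below -/
import Mathlib

section
/- Let N ≥ 3 be an integer, γ ≥ 3/2, and let Γ_N be the set of vectors of length N whose entries take values in a fixed finite set D of cardinality at most N^{1/2}. For θ' ∈ Γ_N let #(θ') be the number of maximal constant runs of θ'. Then ∑_{θ'∈Γ_N} exp(-γ (log N) #(θ')) ≤ 1. -/
open Finset Real

/-!
Group the vectors by the set `S ⊆ {0, …, N-2}` of positions where the next entry differs.
A vector is determined by its first entry and by its entries right after each position of `S`,
so at most `|D| ^ (#S + 1) ≤ N ^ ((#S + 1) / 2)` vectors share `S`, while each of them has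
weight `N ^ (-γ (#S + 1)) ≤ N ^ (-3/2 (#S + 1))`. Summing over `S` by the binomial theorem gives at
most `N⁻¹ (1 + N⁻¹) ^ (N - 1) ≤ e / N ≤ 1`.
-/

/-- For `N ≠ 0`, `f` has `#(jumps f) + 1` maximal constant runs. -/
def jumps {α : Type*} [DecidableEq α] {N : ℕ} (f : Fin N → α) : Finset (Fin (N - 1)) :=
  univ.filter fun i => f ⟨i, by have := i.isLt; omega⟩ ≠ f ⟨i + 1, by have := i.isLt; omega⟩

theorem card_jumps_fiber_le {α : Type*} [Fintype α] [DecidableEq α] {N : ℕ} (hN : 0 < N)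
    (S : Finset (Fin (N - 1))) :
    Fintype.card {f : Fin N → α // jumps f = S} ≤ Fintype.card α ^ (#S + 1) := by
  have hinj : Function.Injective fun (f : {f : Fin N → α // jumps f = S}) (o : Option S) =>
      o.elim (f.1 ⟨0, hN⟩) fun i => f.1 ⟨i.1 + 1, by have := i.1.isLt; omega⟩ := by
    rintro ⟨f, hf⟩ ⟨g, hg⟩ hfg
    suffices h : ∀ k (hk : k < N), f ⟨k, hk⟩ = g ⟨k, hk⟩ from
      Subtype.ext (funext fun k => h k k.isLt)
    intro k hk
    induction k with
    | zero => exact congrFun hfg none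
    | succ j ih =>
      by_cases hj : (⟨j, by omega⟩ : Fin (N - 1)) ∈ S
      · exact congrFun hfg (some ⟨_, hj⟩)
      · have hf_step : f ⟨j, by omega⟩ = f ⟨j + 1, hk⟩ := by
          simpa [← hf, jumps] using hj
        have hg_step : g ⟨j, by omega⟩ = g ⟨j + 1, hk⟩ := by
          simpa [← hg, jumps] using hj
        rw [← hf_step, ← hg_step, ih]
  simpa [Fintype.card_fun, Fintype.card_option] using Fintype.card_le_of_injective _ hinj

theorem sum_pow_card_jumps_le {α : Type*} [Fintype α] [DecidableEq α] {N : ℕ} (hN : 0 < N)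
    {c : ℝ} (hc : 0 ≤ c) :
    ∑ f : Fin N → α, c ^ (#(jumps f) + 1)
      ≤ Fintype.card α * c * (Fintype.card α * c + 1) ^ (N - 1) := by
  calc ∑ f : Fin N → α, c ^ (#(jumps f) + 1)
      = ∑ S : Finset (Fin (N - 1)), Fintype.card {f : Fin N → α // jumps f = S} * c ^ (#S + 1) := by
        rw [← Fintype.sum_fiberwise' jumps fun S => c ^ (#S + 1)]
        simp only [sum_const, card_univ, nsmul_eq_mul]
    _ ≤ ∑ S : Finset (Fin (N - 1)), (Fintype.card α * c) ^ (#S + 1) := by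
        gcongr with S
        rw [mul_pow]
        gcongr
        exact_mod_cast card_jumps_fiber_le hN S
    _ = Fintype.card α * c *
          ∑ S : Finset (Fin (N - 1)), (Fintype.card α * c) ^ #S * 1 ^ (N - 1 - #S) := by
        simp only [mul_sum, one_pow, mul_one, pow_succ, mul_comm]
    _ = Fintype.card α * c * (Fintype.card α * c + 1) ^ (N - 1) := by
        rw [Fin.sum_pow_mul_eq_add_pow]

theorem inv_add_one_pow_pred_le {N : ℕ} (hN : 3 ≤ N) : ((N : ℝ)⁻¹ + 1) ^ (N - 1) ≤ N :=
  calc ((N : ℝ)⁻¹ + 1) ^ (N - 1) ≤ (1 + (N : ℝ)⁻¹) ^ N := by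
        rw [add_comm]
        exact pow_le_pow_right₀ (by simp) (Nat.sub_le N 1)
    _ ≤ exp 1 := one_add_inv_pow_le_exp
    _ ≤ N := exp_one_lt_three.le.trans (by exact_mod_cast hN)

theorem mul_exp_neg_mul_log_le_inv {x a γ : ℝ} (hx : 1 ≤ x) (ha : a ≤ √x) (hγ : 3 / 2 ≤ γ) :
    a * exp (-γ * log x) ≤ x⁻¹ :=
  have hx0 : 0 < x := by linarith
  calc a * exp (-γ * log x) ≤ x ^ (1 / 2 : ℝ) * x ^ (-γ) := by
        rw [rpow_def_of_pos hx0 (-γ), mul_comm (log x), ← sqrt_eq_rpow]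
        gcongr
    _ = x ^ (1 / 2 - γ) := by rw [← rpow_add hx0, sub_eq_add_neg]
    _ ≤ x ^ (-1 : ℝ) := rpow_le_rpow_of_exponent_le hx (by linarith)
    _ = x⁻¹ := rpow_neg_one x

/-- Lemma 1 of Kolaczyk–Nowak: for `N ≥ 3`, `γ ≥ 3/2`, and vectors of length `N`
with entries in a set `D` of cardinality at most `√N`, summing
`exp(-γ (log N) · #(θ'))` over all such vectors, where `#(θ')` is the number of
maximal constant runs, gives at most `1`. -/
theorem kraft_inequality_constant_runs (N : ℕ) (hN : 3 ≤ N) (γ : ℝ) (hγ : 3 / 2 ≤ γ)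
    (D : Type*) [Fintype D] [DecidableEq D]
    (hD : (Fintype.card D : ℝ) ≤ Real.sqrt N) :
    ∑ f : Fin N → D,
      Real.exp (-γ * Real.log N *
        (1 + ((Finset.univ : Finset (Fin (N - 1))).filter
          (fun i : Fin (N - 1) => f ⟨(i : ℕ), by have := i.isLt; omega⟩
                  ≠ f ⟨(i : ℕ) + 1, by have := i.isLt; omega⟩)).card)) ≤ 1 := by
  set c := exp (-γ * log N)
  have hN1 : (1 : ℝ) ≤ N := by exact_mod_cast (by omega : 1 ≤ N)
  have hweight : ∀ f : Fin N → D, exp (-γ * log N * (1 + #(jumps f))) = c ^ (#(jumps f) + 1) := by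
    intro f
    rw [← exp_nat_mul, Nat.cast_add_one, add_comm (1 : ℝ), mul_comm]
  calc _ = ∑ f : Fin N → D, c ^ (#(jumps f) + 1) := sum_congr rfl fun f _ => hweight f
    _ ≤ Fintype.card D * c * (Fintype.card D * c + 1) ^ (N - 1) :=
        sum_pow_card_jumps_le (by omega) (exp_nonneg _)
    _ ≤ (N : ℝ)⁻¹ * ((N : ℝ)⁻¹ + 1) ^ (N - 1) := by
        have hc := mul_exp_neg_mul_log_le_inv hN1 hD hγ
        gcongr
    _ ≤ (N : ℝ)⁻¹ * N := by
        gcongr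
        exact inv_add_one_pow_pred_le hN
    _ = 1 := inv_mul_cancel₀ (by positivity)
end

section
/- If X = (X₀,...,X_{N-1}) are independent Poisson random variables with means θ₀,...,θ_{N-1} > 0 and N = 2^J, then the joint pmf factors as p(X|θ) = p(X_{0,0}|θ_{0,0}) ∏_{j=0}^{J-1} ∏_{k=0}^{2^j-1} Binomial-pmf(X_{j+1,2k}; X_{j,k}, ω_{j,k}), where X_{j,k} = ∑_{i: ⌊i 2^j / N⌋ = k} X_i, θ_{j,k} is defined analogously from θ, ω_{j,k} = θ_{j+1,2k}/θ_{j,k}, and p(X_{0,0}|θ_{0,0}) is the Poisson(θ_{0,0}) pmf. -/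
open Finset Real

/-- The dyadic block of indices `i ∈ {0,…,N-1}` with `⌊i 2^j / N⌋ = k`. -/
def dyadicBlock (N j k : ℕ) : Finset (Fin N) :=
  Finset.univ.filter (fun i => (i : ℕ) * 2 ^ j / N = k)

/-- Aggregation of a vector over the dyadic block at scale `j`, position `k`. -/
def dyadicAgg {N : ℕ} {M : Type*} [AddCommMonoid M] (f : Fin N → M) (j k : ℕ) : M :=
  ∑ i ∈ dyadicBlock N j k, f i

/-!
The joint pmf of two independent Poisson variables with means `a`, `b` is the pmf of their
sum, Poisson with mean `a + b`, times the binomial pmf of the first given the sum, with success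
probability `a / (a + b)`. The dyadic block `(j, k)` is the disjoint union of its children
`(j + 1, 2k)` and `(j + 1, 2k + 1)`, so applying this identity at every node of level `j`
turns the product of the Poisson pmfs of the aggregates at level `j + 1` into that at
level `j` times the binomial factors of level `j`. Telescoping from the finest level `J`,
where the aggregates are the observations themselves, down to the root gives the
factorization.
-/

noncomputable def poissonWeight (θ : ℝ) (n : ℕ) : ℝ :=
  exp (-θ) * θ ^ n / (n.factorial : ℝ)

noncomputable def binomialWeight (n m : ℕ) (p : ℝ) : ℝ :=
  (n.choose m : ℝ) * p ^ m * (1 - p) ^ (n - m)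

theorem poissonWeight_mul_poissonWeight {a b : ℝ} (hab : a + b ≠ 0) (m n : ℕ) :
    poissonWeight a m * poissonWeight b n =
      poissonWeight (a + b) (m + n) * binomialWeight (m + n) m (a / (a + b)) := by
  have h_compl : 1 - a / (a + b) = b / (a + b) := by field_simp; ring
  have h_choose : ((m + n).choose m : ℝ) * (m.factorial : ℝ) * (n.factorial : ℝ) =
      ((m + n).factorial : ℝ) := by
    rw [Nat.choose_symm_add]
    exact_mod_cast Nat.add_choose_mul_factorial_mul_factorial m n
  have h_choose_ne : ((m + n).choose m : ℝ) ≠ 0 := by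
    exact_mod_cast (Nat.choose_pos (Nat.le_add_right m n)).ne'
  unfold poissonWeight binomialWeight
  rw [h_compl, Nat.add_sub_cancel_left, neg_add, exp_add, ← h_choose, div_pow, div_pow, pow_add]
  field_simp

theorem prod_range_two_mul {M : Type*} [CommMonoid M] (n : ℕ) (f : ℕ → M) :
    ∏ i ∈ range (2 * n), f i = ∏ k ∈ range n, (f (2 * k) * f (2 * k + 1)) := by
  induction n with
  | zero => simp
  | succ n ih => rw [Nat.mul_succ, prod_range_succ, prod_range_succ, ih, prod_range_succ, mul_assoc]

section Dyadic

variable {N : ℕ} {M : Type*} [AddCommMonoid M]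

theorem dyadicBlock_eq_union (j k : ℕ) :
    dyadicBlock N j k = dyadicBlock N (j + 1) (2 * k) ∪ dyadicBlock N (j + 1) (2 * k + 1) := by
  ext i
  simp only [dyadicBlock, mem_filter, mem_univ, true_and, mem_union]
  -- `⌊2y⌋ / 2 = ⌊y⌋` for `y = i 2^j / N`
  have h_halve : (i : ℕ) * 2 ^ (j + 1) / N / 2 = (i : ℕ) * 2 ^ j / N := by
    rw [Nat.div_div_eq_div_mul, pow_succ, ← mul_assoc, Nat.mul_div_mul_right _ _ two_pos]
  omega

theorem dyadicAgg_eq_add (f : Fin N → M) (j k : ℕ) :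
    dyadicAgg f j k = dyadicAgg f (j + 1) (2 * k) + dyadicAgg f (j + 1) (2 * k + 1) := by
  have h_disj : Disjoint (dyadicBlock N (j + 1) (2 * k)) (dyadicBlock N (j + 1) (2 * k + 1)) := by
    rw [dyadicBlock, dyadicBlock, disjoint_filter]
    omega
  rw [dyadicAgg, dyadicBlock_eq_union, sum_union h_disj, dyadicAgg, dyadicAgg]

theorem dyadicAgg_finest (J : ℕ) (f : Fin (2 ^ J) → M) (i : Fin (2 ^ J)) :
    dyadicAgg f J i = f i := by
  have h_block : dyadicBlock (2 ^ J) J i = {i} := by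
    ext a
    simp [dyadicBlock, Fin.ext_iff]
  rw [dyadicAgg, h_block, sum_singleton]

theorem dyadicBlock_nonempty {J j k : ℕ} (hj : j ≤ J) (hk : k < 2 ^ j) :
    (dyadicBlock (2 ^ J) j k).Nonempty := by
  have h_pow : 2 ^ J = 2 ^ (J - j) * 2 ^ j := by rw [← pow_add, Nat.sub_add_cancel hj]
  have h_lt : k * 2 ^ (J - j) < 2 ^ J := by
    rw [h_pow, mul_comm]
    exact Nat.mul_lt_mul_of_pos_left hk (by positivity)
  refine ⟨⟨k * 2 ^ (J - j), h_lt⟩, ?_⟩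
  simp only [dyadicBlock, mem_filter, mem_univ, true_and]
  rw [h_pow, mul_assoc, Nat.mul_div_cancel _ (by positivity)]

theorem dyadicAgg_pos {J j k : ℕ} {θ : Fin (2 ^ J) → ℝ} (hθ : ∀ i, 0 < θ i) (hj : j ≤ J)
    (hk : k < 2 ^ j) : 0 < dyadicAgg θ j k :=
  sum_pos (fun i _ => hθ i) (dyadicBlock_nonempty hj hk)

end Dyadic

section Factorization

variable {J : ℕ} {θ : Fin (2 ^ J) → ℝ}

theorem prod_poissonWeight_level_succ (hθ : ∀ i, 0 < θ i) (x : Fin (2 ^ J) → ℕ) {L : ℕ} (hL : L < J) :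
    ∏ k ∈ range (2 ^ (L + 1)), poissonWeight (dyadicAgg θ (L + 1) k) (dyadicAgg x (L + 1) k) =
      (∏ k ∈ range (2 ^ L), poissonWeight (dyadicAgg θ L k) (dyadicAgg x L k)) *
        ∏ k ∈ range (2 ^ L), binomialWeight (dyadicAgg x L k) (dyadicAgg x (L + 1) (2 * k))
          (dyadicAgg θ (L + 1) (2 * k) / dyadicAgg θ L k) := by
  rw [← prod_mul_distrib, pow_succ', prod_range_two_mul]
  refine prod_congr rfl fun k hk => ?_
  have h_parent : 0 < dyadicAgg θ L k := dyadicAgg_pos hθ hL.le (mem_range.mp hk)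
  rw [dyadicAgg_eq_add θ L k] at h_parent ⊢
  rw [dyadicAgg_eq_add x L k]
  exact poissonWeight_mul_poissonWeight h_parent.ne' _ _

theorem prod_poissonWeight_level (hθ : ∀ i, 0 < θ i) (x : Fin (2 ^ J) → ℕ) {L : ℕ} (hL : L ≤ J) :
    ∏ k ∈ range (2 ^ L), poissonWeight (dyadicAgg θ L k) (dyadicAgg x L k) =
      poissonWeight (dyadicAgg θ 0 0) (dyadicAgg x 0 0) *
        ∏ j ∈ range L, ∏ k ∈ range (2 ^ j), binomialWeight (dyadicAgg x j k)
          (dyadicAgg x (j + 1) (2 * k)) (dyadicAgg θ (j + 1) (2 * k) / dyadicAgg θ j k) := by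
  induction L with
  | zero => simp
  | succ L ih =>
    rw [prod_poissonWeight_level_succ hθ x hL, ih (by omega), prod_range_succ, mul_assoc]

end Factorization

/-- Multiscale factorization of the Poisson likelihood (equation (4) for model (P)):
the joint pmf of `N = 2^J` independent Poissons factors as the Poisson pmf of the
total times a product of binomial pmfs of the left-child aggregates given the
parent aggregates, with success probabilities `ω_{j,k} = θ_{j+1,2k} / θ_{j,k}`. -/
theorem poisson_multiscale_factorization (J : ℕ) (θ : Fin (2 ^ J) → ℝ)
    (hθ : ∀ i, 0 < θ i) (x : Fin (2 ^ J) → ℕ) :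
    ∏ i, (Real.exp (-θ i) * θ i ^ x i / (Nat.factorial (x i) : ℝ))
      = (Real.exp (-(dyadicAgg θ 0 0)) * (dyadicAgg θ 0 0) ^ (dyadicAgg x 0 0) /
            (Nat.factorial (dyadicAgg x 0 0) : ℝ)) *
        ∏ j ∈ Finset.range J, ∏ k ∈ Finset.range (2 ^ j),
          ((Nat.choose (dyadicAgg x j k) (dyadicAgg x (j + 1) (2 * k)) : ℝ) *
            (dyadicAgg θ (j + 1) (2 * k) / dyadicAgg θ j k) ^
              (dyadicAgg x (j + 1) (2 * k)) *
            (1 - dyadicAgg θ (j + 1) (2 * k) / dyadicAgg θ j k) ^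
              (dyadicAgg x j k - dyadicAgg x (j + 1) (2 * k))) := by
  have h_finest : ∏ i, poissonWeight (θ i) (x i) =
      ∏ k ∈ range (2 ^ J), poissonWeight (dyadicAgg θ J k) (dyadicAgg x J k) := by
    rw [← Fin.prod_univ_eq_prod_range]
    simp only [dyadicAgg_finest]
  have h_factor := h_finest.trans (prod_poissonWeight_level hθ x le_rfl)
  unfold poissonWeight binomialWeight at h_factor
  exact h_factor
end
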